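/- Let A be a bounded self-adjoint operator on a nontrivial complex Hilbert space ℌ equipped with a self-dual cone 𝔓, and let E(A) be the infimum of the spectrum of A. Then the following are equivalent: (i) e^{−βA} ⊵ 0 w.r.t. 𝔓 for all β ≥ 0; (ii) for every real s > −E(A), the operator A + s·1 is invertible in the algebra of bounded operators and (A + s·1)^{−1} ⊵ 0 w.r.t. 𝔓. -/

import Mathlib

open scoped ComplexOrder

noncomputable section

variable {H : Type*} [NormedAddCommGroup H] [InnerProductSpace ℂ H]

/-- A self-dual cone in a complex Hilbert space: a closed convex subset,
stable under multiplication by nonnegative reals, equal to its dual cone. -/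
def IsSelfDualCone (P : Set H) : Prop :=
  IsClosed P ∧ Convex ℝ P ∧ (∀ t : ℝ, 0 ≤ t → ∀ x ∈ P, t • x ∈ P) ∧
    P = {η : H | ∀ ξ ∈ P, 0 ≤ (inner ℂ η ξ : ℂ)}

/-- `A ⊵ 0` w.r.t. `P`: the operator `A` preserves the positivity. -/
def PosPres (P : Set H) (A : H →L[ℂ] H) : Prop := ∀ x ∈ P, A x ∈ P

/-- `η > 0` w.r.t. `P`: the vector `η` is strictly positive. -/
def StrictPos (P : Set H) (η : H) : Prop :=
  η ∈ P ∧ ∀ ξ ∈ P, ξ ≠ 0 → 0 < (inner ℂ ξ η : ℂ)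

/-- `A ⊳ 0` w.r.t. `P`: the operator `A` improves the positivity. -/
def PosImp (P : Set H) (A : H →L[ℂ] H) : Prop :=
  ∀ ξ ∈ P, ξ ≠ 0 → StrictPos P (A ξ)

/-- `E(A)`: the infimum of the (real) spectrum of `A`. -/
def specInf (A : H →L[ℂ] H) : ℝ := sInf {t : ℝ | (t : ℂ) ∈ spectrum ℂ A}

/-- `B` is ergodic w.r.t. `P`. -/
def IsErgodic (P : Set H) (B : H →L[ℂ] H) : Prop :=
  PosPres P B ∧ ∀ ξ ∈ P, ξ ≠ 0 → ∀ η ∈ P, η ≠ 0 → ∃ k : ℕ, 0 < (inner ℂ ξ ((B ^ k) η) : ℂ)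

/-!
(i) ⇒ (ii): for `t > 0` the operator `Gₜ = e^{-t(A+s)}` preserves `P` and has norm
`e^{-t(E(A)+s)} < 1`, so `t (1 - Gₜ)⁻¹ = t ∑ₖ Gₜᵏ` preserves `P`. As `t → 0⁺`,
`(1 - Gₜ)/t → A + s` (the derivative of `Gₜ` at `0`), and inversion is continuous, so these
operators converge to `(A + s)⁻¹`.

(ii) ⇒ (i): `Kₛ = s (A + s)⁻¹ = (1 + A/s)⁻¹` preserves `P`, hence so does
`e^{-β Aₛ} = e^{-βs} e^{βs Kₛ}` for the Yosida approximation `Aₛ = s (1 - Kₛ) = A Kₛ`,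
and `Aₛ → A` as `s → ∞`.

In both directions the limit preserves `P` because the positivity preserving operators form a
norm-closed set.
-/

open Filter Topology

namespace Ring

variable {𝕜 𝔸 : Type*} [Field 𝕜] [Ring 𝔸] [Algebra 𝕜 𝔸]

theorem inverse_smul {c : 𝕜} (hc : c ≠ 0) (x : 𝔸) : inverse (c • x) = c⁻¹ • inverse x := by
  by_cases hx : IsUnit x
  · obtain ⟨u, rfl⟩ := hx
    change inverse ((Units.mk0 c hc • u : 𝔸ˣ) : 𝔸) = _
    rw [inverse_unit, inverse_unit, Units.smul_inv]
    rfl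
  · have hcx : ¬IsUnit (c • x) := fun h => hx ((isUnit_smul_iff (Units.mk0 c hc) x).1 h)
    rw [inverse_non_unit _ hx, inverse_non_unit _ hcx, smul_zero]

theorem mul_inverse_one_add_inv_smul {a : 𝔸} {s : 𝕜} (hs : s ≠ 0) (hu : IsUnit (1 + s⁻¹ • a)) :
    a * inverse (1 + s⁻¹ • a) = s • (1 - inverse (1 + s⁻¹ • a)) := by
  have h := mul_inverse_cancel _ hu
  rw [add_mul, one_mul, smul_mul_assoc] at h
  rw [← inv_smul_eq_iff₀ hs, eq_sub_iff_add_eq, add_comm]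
  exact h

end Ring

section BanachAlgebra

variable {𝔸 : Type*} [NormedRing 𝔸] [NormedAlgebra ℝ 𝔸] [CompleteSpace 𝔸]

theorem HasDerivAt.tendsto_smul_inverse_one_sub {f : ℝ → 𝔸} {b : 𝔸}
    (hf : HasDerivAt f (-b) 0) (hb : IsUnit b) (h0 : f 0 = 1) :
    Tendsto (fun t : ℝ => t • Ring.inverse (1 - f t)) (𝓝[>] 0) (𝓝 (Ring.inverse b)) := by
  have hslope : Tendsto (fun t : ℝ => t⁻¹ • (1 - f t)) (𝓝[>] 0) (𝓝 b) := by
    have := hf.tendsto_slope_zero_right.neg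
    simp only [zero_add, h0, neg_neg, ← smul_neg, neg_sub] at this
    exact this
  refine ((NormedRing.inverse_continuousAt hb.unit).tendsto.comp hslope).congr' ?_
  filter_upwards [self_mem_nhdsWithin] with t (ht : 0 < t)
  simp [Ring.inverse_smul (inv_ne_zero ht.ne')]

theorem tendsto_mul_inverse_one_add_inv_smul (a : 𝔸) :
    Tendsto (fun s : ℝ => a * Ring.inverse (1 + s⁻¹ • a)) atTop (𝓝 a) := by
  have h1 : Tendsto (fun s : ℝ => 1 + s⁻¹ • a) atTop (𝓝 1) := by
    simpa using tendsto_const_nhds.add ((tendsto_inv_atTop_zero (𝕜 := ℝ)).smul_const a)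
  simpa using tendsto_const_nhds.mul ((NormedRing.inverse_continuousAt 1).tendsto.comp h1)

end BanachAlgebra

namespace IsSelfDualCone

variable {P : Set H}

theorem zero_mem (hP : IsSelfDualCone P) : (0 : H) ∈ P := by
  rw [hP.2.2.2]
  intro ξ _
  simp

theorem smul_mem (hP : IsSelfDualCone P) {t : ℝ} (ht : 0 ≤ t) {x : H} (hx : x ∈ P) :
    t • x ∈ P :=
  hP.2.2.1 t ht x hx

theorem add_mem (hP : IsSelfDualCone P) {x y : H} (hx : x ∈ P) (hy : y ∈ P) : x + y ∈ P := by
  have h := hP.smul_mem zero_le_two (hP.2.1 hx hy (by norm_num) (by norm_num) (add_halves 1))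
  rwa [smul_add, smul_smul, smul_smul, mul_one_div_cancel two_ne_zero, one_smul, one_smul] at h

end IsSelfDualCone

theorem isClosed_setOf_posPres {P : Set H} (hP : IsClosed P) :
    IsClosed {T : H →L[ℂ] H | PosPres P T} := by
  simp only [PosPres, Set.ofPred_forall]
  exact isClosed_biInter fun x _ => hP.preimage (ContinuousLinearMap.apply ℂ H x).continuous

namespace PosPres

variable {P : Set H} {S T : H →L[ℂ] H}

theorem one : PosPres P 1 := fun _ hx => hx

theorem mul (hS : PosPres P S) (hT : PosPres P T) : PosPres P (S * T) :=
  fun x hx => hS _ (hT x hx)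

theorem pow (hT : PosPres P T) (n : ℕ) : PosPres P (T ^ n) := by
  induction n with
  | zero => exact one
  | succ n ih => rw [pow_succ]; exact ih.mul hT

theorem smul (hP : IsSelfDualCone P) (hT : PosPres P T) {t : ℝ} (ht : 0 ≤ t) :
    PosPres P (t • T) :=
  fun x hx => hP.smul_mem ht (hT x hx)

theorem zero (hP : IsSelfDualCone P) : PosPres P 0 := fun _ _ => hP.zero_mem

theorem add (hP : IsSelfDualCone P) (hS : PosPres P S) (hT : PosPres P T) : PosPres P (S + T) :=
  fun x hx => hP.add_mem (hS x hx) (hT x hx)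

theorem sum (hP : IsSelfDualCone P) {ι : Type*} (s : Finset ι) {T : ι → H →L[ℂ] H}
    (hT : ∀ i ∈ s, PosPres P (T i)) : PosPres P (∑ i ∈ s, T i) :=
  Finset.sum_induction T (PosPres P) (fun _ _ => add hP) (zero hP) hT

theorem of_tendsto (hP : IsSelfDualCone P) {ι : Type*} {l : Filter ι} [l.NeBot]
    {F : ι → H →L[ℂ] H} (hF : Tendsto F l (𝓝 T)) (hpos : ∀ᶠ i in l, PosPres P (F i)) :
    PosPres P T :=
  (isClosed_setOf_posPres hP.1).mem_of_tendsto hF hpos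

theorem tsum (hP : IsSelfDualCone P) {T : ℕ → H →L[ℂ] H} (hsum : Summable T)
    (hT : ∀ n, PosPres P (T n)) : PosPres P (∑' n, T n) :=
  of_tendsto hP hsum.hasSum (.of_forall fun s => sum hP s fun i _ => hT i)

variable [CompleteSpace H]

theorem inverse_one_sub (hP : IsSelfDualCone P) (hT : PosPres P T) (hnorm : ‖T‖ < 1) :
    PosPres P (Ring.inverse (1 - T)) := by
  rw [← geom_series_eq_inverse T hnorm]
  exact tsum hP (summable_geometric_of_norm_lt_one hnorm) hT.pow

theorem exp (hP : IsSelfDualCone P) (hT : PosPres P T) : PosPres P (NormedSpace.exp T) := by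
  rw [NormedSpace.exp_eq_tsum ℝ]
  exact tsum hP (NormedSpace.expSeries_summable' T) fun n => (hT.pow n).smul hP (by positivity)

theorem exp_smul_sub_one (hP : IsSelfDualCone P) (hT : PosPres P T) {c : ℝ} (hc : 0 ≤ c) :
    PosPres P (NormedSpace.exp (c • (T - 1))) := by
  let +nondep : NormedAlgebra ℚ (H →L[ℂ] H) := .restrictScalars ℚ ℂ _
  have hsplit : c • (T - 1) = c • T + algebraMap ℝ _ (-c) := by
    rw [Algebra.algebraMap_eq_smul_one, smul_sub, neg_smul, sub_eq_add_neg]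
  rw [hsplit, NormedSpace.exp_add_of_commute (Algebra.commutes _ _).symm,
    ← NormedSpace.algebraMap_exp_comm, ← Real.exp_eq_exp_ℝ, ← Algebra.commutes, ← Algebra.smul_def]
  exact ((hT.smul hP hc).exp hP).smul hP (Real.exp_pos _).le

end PosPres

section Spectrum

variable [CompleteSpace H] {A : H →L[ℂ] H}

theorem specInf_le {x : ℝ} (hx : x ∈ spectrum ℝ A) : specInf A ≤ x :=
  csInf_le (spectrum.isCompact A).bddBelow hx

theorem isUnit_add_smul_one_of_neg_specInf_lt {s : ℝ} (hs : -specInf A < s) :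
    IsUnit (A + (s : ℂ) • 1) := by
  have hmem : -s ∉ spectrum ℝ A := fun h => by linarith [specInf_le h]
  rw [spectrum.notMem_iff, Algebra.algebraMap_eq_smul_one] at hmem
  simpa [Complex.coe_smul, add_comm] using hmem.neg

theorem norm_exp_smul_le (hA : IsSelfAdjoint A) {r : ℝ} (hr : r ≤ 0) :
    ‖NormedSpace.exp (r • A)‖ ≤ Real.exp (r * specInf A) := by
  rw [← CFC.real_exp_eq_normedSpace_exp, ← cfc_comp_const_mul r Real.exp A]
  refine norm_cfc_le (Real.exp_pos _).le fun x hx => ?_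
  rw [Real.norm_eq_abs, abs_of_pos (Real.exp_pos _)]
  exact Real.exp_le_exp.2 (mul_le_mul_of_nonpos_left (specInf_le hx) hr)

end Spectrum

section Resolvent

variable [CompleteSpace H] {P : Set H} {A : H →L[ℂ] H}

theorem posPres_resolvent_of_posPres_exp (hP : IsSelfDualCone P) (hA : IsSelfAdjoint A)
    (hexp : ∀ β : ℝ, 0 ≤ β → PosPres P (NormedSpace.exp (-(β : ℂ) • A)))
    {s : ℝ} (hs : -specInf A < s) : PosPres P (Ring.inverse (A + (s : ℂ) • 1)) := by
  set G : ℝ → H →L[ℂ] H := fun t => Real.exp (-(t * s)) • NormedSpace.exp ((-t) • A)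
  have hG0 : G 0 = 1 := by simp [G]
  have hGderiv : HasDerivAt G (-(A + (s : ℂ) • 1)) 0 := by
    have h1 : HasDerivAt (fun t : ℝ => Real.exp (-(t * s))) (-s) 0 := by
      simpa using ((hasDerivAt_id (0 : ℝ)).mul_const s).neg.exp
    have h2 : HasDerivAt (fun t : ℝ => NormedSpace.exp ((-t) • A)) (-A) 0 := by
      simpa [Function.comp_def] using
        (hasDerivAt_exp_smul_const (𝕂 := ℝ) A _).scomp (0 : ℝ) (hasDerivAt_neg 0)
    refine (h1.smul h2).congr_deriv ?_
    simp [Complex.coe_smul, add_comm]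
  have hGpos : ∀ t > 0, PosPres P (t • Ring.inverse (1 - G t)) := fun t ht => by
    have hpos : PosPres P (G t) := by
      have := hexp t ht.le
      rw [← Complex.ofReal_neg, Complex.coe_smul] at this
      exact this.smul hP (Real.exp_pos _).le
    have hnorm : ‖G t‖ < 1 := calc
      ‖G t‖ ≤ Real.exp (-(t * s)) * Real.exp (-t * specInf A) := by
        rw [norm_smul, Real.norm_eq_abs, abs_of_pos (Real.exp_pos _)]
        gcongr
        exact norm_exp_smul_le hA (by linarith)
      _ = Real.exp (-(t * (specInf A + s))) := by rw [← Real.exp_add]; ring_nf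
      _ < 1 := Real.exp_lt_one_iff.2 (by nlinarith)
    exact (hpos.inverse_one_sub hP hnorm).smul hP ht.le
  exact PosPres.of_tendsto hP
    (hGderiv.tendsto_smul_inverse_one_sub (isUnit_add_smul_one_of_neg_specInf_lt hs) hG0)
    (eventually_mem_nhdsWithin.mono hGpos)

theorem posPres_exp_of_posPres_resolvent (hP : IsSelfDualCone P)
    (hres : ∀ᶠ s : ℝ in atTop,
      IsUnit (A + (s : ℂ) • 1) ∧ PosPres P (Ring.inverse (A + (s : ℂ) • 1)))
    {β : ℝ} (hβ : 0 ≤ β) : PosPres P (NormedSpace.exp (-(β : ℂ) • A)) := by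
  let +nondep : NormedAlgebra ℚ (H →L[ℂ] H) := .restrictScalars ℚ ℂ _
  refine PosPres.of_tendsto hP ((NormedSpace.exp_continuous.tendsto _).comp
    ((tendsto_mul_inverse_one_add_inv_smul A).const_smul (-(β : ℂ)))) ?_
  filter_upwards [hres, eventually_gt_atTop 0] with s ⟨hu, hpos⟩ hs
  have hK : 1 + s⁻¹ • A = s⁻¹ • (A + (s : ℂ) • 1) := by
    rw [smul_add, Complex.coe_smul, smul_smul, inv_mul_cancel₀ hs.ne', one_smul, add_comm]
  have hKunit : IsUnit (1 + s⁻¹ • A) :=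
    hK ▸ (isUnit_smul_iff (Units.mk0 s⁻¹ (inv_ne_zero hs.ne')) _).2 hu
  have hKpos : PosPres P (Ring.inverse (1 + s⁻¹ • A)) := by
    rw [hK, Ring.inverse_smul (inv_ne_zero hs.ne'), inv_inv]
    exact hpos.smul hP hs.le
  have hgen : -(β : ℂ) • (A * Ring.inverse (1 + s⁻¹ • A)) =
      (β * s) • (Ring.inverse (1 + s⁻¹ • A) - 1) := by
    rw [Ring.mul_inverse_one_add_inv_smul hs.ne' hKunit, neg_smul, Complex.coe_smul, smul_smul,
      ← smul_neg, neg_sub]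
  rw [Function.comp_apply, hgen]
  exact hKpos.exp_smul_sub_one hP (mul_nonneg hβ hs.le)

end Resolvent

theorem exp_posPres_iff_resolvent_posPres_general [CompleteSpace H]
    (P : Set H) (hP : IsSelfDualCone P) (A : H →L[ℂ] H) (hA : IsSelfAdjoint A) :
    (∀ β : ℝ, 0 ≤ β → PosPres P (NormedSpace.exp (-(β : ℂ) • A))) ↔
    (∀ s : ℝ, -specInf A < s →
      IsUnit (A + (s : ℂ) • 1) ∧ PosPres P (Ring.inverse (A + (s : ℂ) • 1))) := by
  constructor
  · intro hexp s hs
    exact ⟨isUnit_add_smul_one_of_neg_specInf_lt hs,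
      posPres_resolvent_of_posPres_exp hP hA hexp hs⟩
  · intro hres β hβ
    refine posPres_exp_of_posPres_resolvent hP ?_ hβ
    filter_upwards [eventually_gt_atTop (-specInf A)] with s hs using hres s hs

/-- Proposition A.1: for a bounded self-adjoint operator `A`, `e^{-βA} ⊵ 0` w.r.t. `P`
for all `β ≥ 0` iff `(A + s)⁻¹` exists and `(A + s)⁻¹ ⊵ 0` w.r.t. `P` for all
`s > -E(A)`. -/
theorem exp_posPres_iff_resolvent_posPres [CompleteSpace H] [Nontrivial H]
    (P : Set H) (hP : IsSelfDualCone P) (A : H →L[ℂ] H) (hA : IsSelfAdjoint A) :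
    (∀ β : ℝ, 0 ≤ β → PosPres P (NormedSpace.exp (-(β : ℂ) • A))) ↔
    (∀ s : ℝ, -specInf A < s →
      IsUnit (A + (s : ℂ) • 1) ∧ PosPres P (Ring.inverse (A + (s : ℂ) • 1))) :=
  exp_posPres_iff_resolvent_posPres_general P hP A hA
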